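/- arXiv:1209.1059 — 2 statements merged into one kernel-verified Lean document; each statement's English description precedes it below -/
import Mathlib

section
/- Consider W(X, A, B) = f·X + λ·X·A·B with f, λ ∈ ℂ nonzero. Then the set of critical points of W (points where ∂W/∂X = ∂W/∂A = ∂W/∂B = 0) is exactly { (X, A, B) : X = 0 and A·B = −f/λ }; in particular it is nonempty. -/
/-! `W` is affine in each variable separately, with partial derivatives `f + λAB`, `λXB` and `λXA`.
The first vanishes only when `AB = -f/λ`, which is nonzero because `f ≠ 0`; so `A` and `B` are
nonzero and the other two vanish exactly when `X = 0`. -/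

section PartialDerivatives

variable {𝕜 : Type*} [NontriviallyNormedField 𝕜] (f lam X A B : 𝕜)

theorem deriv_fX_add_lXAB_fst :
    deriv (fun x => f * x + lam * x * A * B) X = f + lam * A * B := by
  have h : HasDerivAt (fun x => f * x + lam * x * A * B) (f + lam * A * B) X := by
    simpa using (((hasDerivAt_id X).const_mul f).fun_add
      ((((hasDerivAt_id X).const_mul lam).mul_const A).mul_const B))
  exact h.deriv

theorem deriv_fX_add_lXAB_snd :
    deriv (fun a => f * X + lam * X * a * B) A = lam * X * B := by
  have h : HasDerivAt (fun a => f * X + lam * X * a * B) (lam * X * B) A := by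
    simpa using ((((hasDerivAt_id A).const_mul (lam * X)).mul_const B).const_add (f * X))
  exact h.deriv

theorem deriv_fX_add_lXAB_thd :
    deriv (fun b => f * X + lam * X * A * b) B = lam * X * A := by
  have h : HasDerivAt (fun b => f * X + lam * X * A * b) (lam * X * A) B := by
    simpa using (((hasDerivAt_id B).const_mul (lam * X * A)).const_add (f * X))
  exact h.deriv

end PartialDerivatives

theorem critical_equations_iff {K : Type*} [Field K] {f lam : K} (hf : f ≠ 0) (hl : lam ≠ 0)
    (X A B : K) :
    (f + lam * A * B = 0 ∧ lam * X * B = 0 ∧ lam * X * A = 0) ↔ (X = 0 ∧ A * B = -f / lam) := by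
  constructor
  · rintro ⟨hfAB, -, hXA⟩
    have hAB : A * B = -f / lam := by
      rw [eq_div_iff hl]
      linear_combination hfAB
    have hA : A ≠ 0 := by
      rintro rfl
      exact hf (by simpa using hfAB)
    exact ⟨by simpa [hl, hA] using hXA, hAB⟩
  · rintro ⟨rfl, hAB⟩
    refine ⟨?_, by ring, by ring⟩
    rw [mul_assoc, hAB]
    field_simp
    ring

/-- For `W = f·X + λ·X·A·B` with `f, λ ≠ 0`, the set of critical points is exactly
`{(X,A,B) : X = 0 ∧ A·B = -f/λ}`, which is nonempty. -/
theorem critical_points_of_fX_plus_lXAB (f lam : ℂ) (hf : f ≠ 0) (hl : lam ≠ 0)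
    (W : ℂ → ℂ → ℂ → ℂ) (hW : W = fun X A B => f * X + lam * X * A * B) :
    (∀ X A B : ℂ,
      (deriv (fun x => W x A B) X = 0 ∧ deriv (fun a => W X a B) A = 0 ∧
        deriv (fun b => W X A b) B = 0) ↔ (X = 0 ∧ A * B = -f / lam)) ∧
    ∃ X A B : ℂ,
      deriv (fun x => W x A B) X = 0 ∧ deriv (fun a => W X a B) A = 0 ∧
        deriv (fun b => W X A b) B = 0 := by
  subst hW
  have critical_iff : ∀ X A B : ℂ,
      (deriv (fun x => f * x + lam * x * A * B) X = 0 ∧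
        deriv (fun a => f * X + lam * X * a * B) A = 0 ∧
        deriv (fun b => f * X + lam * X * A * b) B = 0) ↔ (X = 0 ∧ A * B = -f / lam) := by
    intro X A B
    rw [deriv_fX_add_lXAB_fst, deriv_fX_add_lXAB_snd, deriv_fX_add_lXAB_thd]
    exact critical_equations_iff hf hl X A B
  exact ⟨critical_iff, 0, 1, -f / lam, (critical_iff 0 1 (-f / lam)).mpr ⟨rfl, one_mul _⟩⟩
end

section
/- Suppose W(z_1, …, z_d) = x · g(y_1, …, y_{d−1}) under the (local, away from z_d = 0) change of variables x = z_d^{2/r_d}, y_i = z_i / z_d^{r_i/r_d} (all r_i rational, r_d ≠ 0), with g holomorphic. Then at any point with x ≠ 0, the conditions ∂W/∂z_i = 0 for all i = 1, …, d are equivalent to g(y) = 0 together with ∂g/∂y_i = 0 for all i = 1, …, d−1. -/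
/-!
With `t = z_d`, `x = t ^ c` (`c = 2 / r_d`) and `y_i = z_i / t ^ {a_i}` (`a_i = r_i / r_d`), moving
`z_j` (`j < d`) alone only moves `y_j`, linearly, so `∂W/∂z_j = x · t ^ {-a_j} · ∂g/∂y_j`; as `x`
and `t ^ {-a_j}` are nonzero, these `d` equations say exactly that the partials of `g` vanish at
`y`. Once `dg(y) = 0`, the chain rule through `y` contributes nothing to `∂W/∂t`, leaving
`∂W/∂t = c t ^ {c - 1} g(y)`, which vanishes iff `g(y) = 0` since `c ≠ 0`. Differentiating `t ^ c`
needs `t` off the branch cut.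
-/

open Complex Function

theorem hasDerivAt_comp_update {𝕜 ι E : Type*} [NontriviallyNormedField 𝕜] [Fintype ι]
    [DecidableEq ι] [NormedAddCommGroup E] [NormedSpace 𝕜 E] {f : (ι → 𝕜) → E}
    {f' : (ι → 𝕜) →L[𝕜] E} {y : ι → 𝕜} (hf : HasFDerivAt f f' y) (i : ι) :
    HasDerivAt (fun w => f (update y i w)) (f' (Pi.single i 1)) (y i) := by
  have hf' : HasFDerivAt f f' (update y i (y i)) := by rwa [update_eq_self]
  exact hf'.comp_hasDerivAt (y i) (hasDerivAt_update y i (y i))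

theorem hasFDerivAt_zero_of_deriv_update_eq_zero {𝕜 ι E : Type*} [NontriviallyNormedField 𝕜]
    [Fintype ι] [DecidableEq ι] [NormedAddCommGroup E] [NormedSpace 𝕜 E]
    {f : (ι → 𝕜) → E} {y : ι → 𝕜} (hf : DifferentiableAt 𝕜 f y)
    (h : ∀ i, deriv (fun w => f (update y i w)) (y i) = 0) :
    HasFDerivAt f (0 : (ι → 𝕜) →L[𝕜] E) y := by
  convert hf.hasFDerivAt
  refine (ContinuousLinearMap.coe_injective (LinearMap.pi_ext fun i x => ?_)).symm
  have hi : fderiv 𝕜 f y (Pi.single i 1) = 0 := by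
    rw [← h i, (hasDerivAt_comp_update hf.hasFDerivAt i).deriv]
  have hx : (Pi.single i x : ι → 𝕜) = x • Pi.single i 1 := by simp [← Pi.single_smul]
  simp [hx, hi]

theorem HasDerivAt.cpow_const_mul_of_hasFDerivAt_zero {E : Type*} [NormedAddCommGroup E]
    [NormedSpace ℂ E] {g : E → ℂ} {φ : ℂ → E} {t c : ℂ} (ht : t ∈ slitPlane)
    (hφ : DifferentiableAt ℂ φ t) (hg : HasFDerivAt g (0 : E →L[ℂ] ℂ) (φ t)) :
    HasDerivAt (fun w => w ^ c * g (φ w)) (c * t ^ (c - 1) * g (φ t)) t := by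
  have hpow : HasDerivAt (fun w : ℂ => w ^ c) (c * t ^ (c - 1)) t :=
    (hasStrictDerivAt_cpow_const ht).hasDerivAt
  have hgφ : HasDerivAt (fun w => g (φ w)) 0 t := hg.comp_hasDerivAt t hφ.hasDerivAt
  simpa only [mul_zero, add_zero] using hpow.fun_mul hgφ

noncomputable def weightedCoords {d : ℕ} (a : Fin d → ℂ) (z : Fin (d + 1) → ℂ) : Fin d → ℂ :=
  fun i => z i.castSucc / z (Fin.last d) ^ a i

theorem weightedCoords_update_castSucc {d : ℕ} (a : Fin d → ℂ) (z : Fin (d + 1) → ℂ)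
    (j : Fin d) (w : ℂ) :
    weightedCoords a (update z j.castSucc w) =
      update (weightedCoords a z) j ((z (Fin.last d) ^ a j)⁻¹ * w) := by
  ext i
  rcases eq_or_ne i j with rfl | hij
  · simp [weightedCoords, (Fin.castSucc_lt_last i).ne', div_eq_inv_mul]
  · simp [weightedCoords, (Fin.castSucc_lt_last j).ne', hij]

theorem weightedCoords_update_last {d : ℕ} (a : Fin d → ℂ) (z : Fin (d + 1) → ℂ) (w : ℂ) :
    weightedCoords a (update z (Fin.last d) w) = fun i => z i.castSucc / w ^ a i := by
  ext i
  simp [weightedCoords, (Fin.castSucc_lt_last i).ne]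

theorem differentiableAt_weightedCoords_update_last {d : ℕ} (a : Fin d → ℂ)
    (z : Fin (d + 1) → ℂ) {t : ℂ} (ht : t ∈ slitPlane) :
    DifferentiableAt ℂ (fun w => weightedCoords a (update z (Fin.last d) w)) t := by
  simp only [weightedCoords_update_last]
  rw [differentiableAt_pi]
  intro i
  exact (differentiableAt_const _).div (differentiableAt_id.cpow_const ht)
    (cpow_ne_zero_iff.mpr (Or.inl (slitPlane_ne_zero ht)))

section

variable {d : ℕ} {c : ℂ} {a : Fin d → ℂ} {g : (Fin d → ℂ) → ℂ} {W : (Fin (d + 1) → ℂ) → ℂ}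
  {z : Fin (d + 1) → ℂ}

theorem deriv_comp_update_castSucc_eq
    (hW : ∀ z : Fin (d + 1) → ℂ, z (Fin.last d) ≠ 0 →
      W z = z (Fin.last d) ^ c * g (weightedCoords a z))
    (hz : z (Fin.last d) ≠ 0) (j : Fin d) :
    deriv (fun w => W (update z j.castSucc w)) (z j.castSucc) =
      z (Fin.last d) ^ c * ((z (Fin.last d) ^ a j)⁻¹ *
        deriv (fun w => g (update (weightedCoords a z) j w)) (weightedCoords a z j)) := by
  have hlast : ∀ w, update z j.castSucc w (Fin.last d) = z (Fin.last d) :=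
    fun w => update_of_ne (Fin.castSucc_lt_last j).ne' _ _
  have hfun : (fun w => W (update z j.castSucc w)) = fun w => z (Fin.last d) ^ c *
      g (update (weightedCoords a z) j ((z (Fin.last d) ^ a j)⁻¹ * w)) := by
    funext w
    rw [hW _ (by rwa [hlast]), hlast, weightedCoords_update_castSucc]
  rw [hfun, deriv_const_mul_field,
    deriv_comp_mul_left _ (fun w => g (update (weightedCoords a z) j w)), smul_eq_mul,
    weightedCoords, div_eq_inv_mul]

theorem hasDerivAt_comp_update_last
    (hW : ∀ z : Fin (d + 1) → ℂ, z (Fin.last d) ≠ 0 →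
      W z = z (Fin.last d) ^ c * g (weightedCoords a z))
    (hz : z (Fin.last d) ∈ slitPlane)
    (hg : HasFDerivAt g (0 : (Fin d → ℂ) →L[ℂ] ℂ) (weightedCoords a z)) :
    HasDerivAt (fun w => W (update z (Fin.last d) w))
      (c * z (Fin.last d) ^ (c - 1) * g (weightedCoords a z)) (z (Fin.last d)) := by
  have := HasDerivAt.cpow_const_mul_of_hasFDerivAt_zero (c := c) hz
    (differentiableAt_weightedCoords_update_last a z hz) (by rwa [update_eq_self])
  rw [update_eq_self] at this
  refine this.congr_of_eventuallyEq ?_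
  filter_upwards [eventually_ne_nhds (slitPlane_ne_zero hz)] with w hw
  rw [hW _ (by rwa [update_self]), update_self]

theorem deriv_comp_update_eq_zero_iff (hc : c ≠ 0)
    (hW : ∀ z : Fin (d + 1) → ℂ, z (Fin.last d) ≠ 0 →
      W z = z (Fin.last d) ^ c * g (weightedCoords a z))
    (hz : z (Fin.last d) ∈ slitPlane) (hg : DifferentiableAt ℂ g (weightedCoords a z)) :
    (∀ i, deriv (fun w => W (update z i w)) (z i) = 0) ↔
      g (weightedCoords a z) = 0 ∧
        ∀ j, deriv (fun w => g (update (weightedCoords a z) j w)) (weightedCoords a z j) = 0 := by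
  have ht := slitPlane_ne_zero hz
  have hpartial : ∀ j : Fin d, deriv (fun w => W (update z j.castSucc w)) (z j.castSucc) = 0 ↔
      deriv (fun w => g (update (weightedCoords a z) j w)) (weightedCoords a z j) = 0 := by
    intro j
    simp [deriv_comp_update_castSucc_eq hW ht, cpow_eq_zero_iff, ht]
  rw [Fin.forall_fin_succ', forall_congr' hpartial, and_comm]
  refine and_congr_left fun hD => ?_
  rw [(hasDerivAt_comp_update_last hW hz (hasFDerivAt_zero_of_deriv_update_eq_zero hg hD)).deriv]
  simp [hc, cpow_eq_zero_iff, ht]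

end

theorem nelson_seiberg_change_of_variables_general (d : ℕ) (r : Fin (d + 1) → ℚ)
    (hrd : r (Fin.last d) ≠ 0)
    (g : (Fin d → ℂ) → ℂ) (hg : Differentiable ℂ g)
    (W : (Fin (d + 1) → ℂ) → ℂ)
    (hW : ∀ z : Fin (d + 1) → ℂ, z (Fin.last d) ≠ 0 →
      W z = z (Fin.last d) ^ (((2 / r (Fin.last d) : ℚ) : ℂ)) *
        g (fun i : Fin d =>
          z i.castSucc / z (Fin.last d) ^ (((r i.castSucc / r (Fin.last d) : ℚ) : ℂ))))
    (z : Fin (d + 1) → ℂ)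
    (hbranch : z (Fin.last d) ∈ Complex.slitPlane) :
    (∀ i : Fin (d + 1), deriv (fun w => W (Function.update z i w)) (z i) = 0) ↔
      (g (fun i : Fin d =>
          z i.castSucc / z (Fin.last d) ^ (((r i.castSucc / r (Fin.last d) : ℚ) : ℂ))) = 0 ∧
       ∀ j : Fin d,
        deriv (fun w => g (Function.update
            (fun i : Fin d => z i.castSucc /
              z (Fin.last d) ^ (((r i.castSucc / r (Fin.last d) : ℚ) : ℂ))) j w))
          ((fun i : Fin d => z i.castSucc /
              z (Fin.last d) ^ (((r i.castSucc / r (Fin.last d) : ℚ) : ℂ))) j) = 0) :=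
  deriv_comp_update_eq_zero_iff (a := fun i => ((r i.castSucc / r (Fin.last d) : ℚ) : ℂ))
    (Rat.cast_ne_zero.mpr (div_ne_zero two_ne_zero hrd)) hW hbranch (hg _)

/-- The Nelson–Seiberg change of variables: away from the singular locus `z_d = 0`
(with the principal branch of fractional powers), if `W(z) = x·g(y)` with
`x = z_d^(2/r_d)` and `y_i = z_i / z_d^(r_i/r_d)`, then at a point with `x ≠ 0` the
SUSY equations `∂W/∂z_i = 0` (for all `i`) are equivalent to `g(y) = 0` together with
`∂g/∂y_i = 0` (for all `i`). -/
theorem nelson_seiberg_change_of_variables (d : ℕ) (r : Fin (d + 1) → ℚ)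
    (hrd : r (Fin.last d) ≠ 0)
    (g : (Fin d → ℂ) → ℂ) (hg : Differentiable ℂ g)
    (W : (Fin (d + 1) → ℂ) → ℂ)
    (hW : ∀ z : Fin (d + 1) → ℂ, z (Fin.last d) ≠ 0 →
      W z = z (Fin.last d) ^ (((2 / r (Fin.last d) : ℚ) : ℂ)) *
        g (fun i : Fin d =>
          z i.castSucc / z (Fin.last d) ^ (((r i.castSucc / r (Fin.last d) : ℚ) : ℂ))))
    (z : Fin (d + 1) → ℂ) (hzd : z (Fin.last d) ≠ 0)
    (hbranch : z (Fin.last d) ∈ Complex.slitPlane)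
    (hx : z (Fin.last d) ^ (((2 / r (Fin.last d) : ℚ) : ℂ)) ≠ 0) :
    (∀ i : Fin (d + 1), deriv (fun w => W (Function.update z i w)) (z i) = 0) ↔
      (g (fun i : Fin d =>
          z i.castSucc / z (Fin.last d) ^ (((r i.castSucc / r (Fin.last d) : ℚ) : ℂ))) = 0 ∧
       ∀ j : Fin d,
        deriv (fun w => g (Function.update
            (fun i : Fin d => z i.castSucc /
              z (Fin.last d) ^ (((r i.castSucc / r (Fin.last d) : ℚ) : ℂ))) j w))
          ((fun i : Fin d => z i.castSucc /
              z (Fin.last d) ^ (((r i.castSucc / r (Fin.last d) : ℚ) : ℂ))) j) = 0) :=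
  nelson_seiberg_change_of_variables_general d r hrd g hg W hW z hbranch
end
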